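/- arXiv:2110.11149 — 2 statements merged into one kernel-verified Lean document; each statement's English description precedes it below -/
import Mathlib

section
/- Let α>0, let J₁ be a positive definite d₁×d₁ matrix, J₂ a positive definite d₂×d₂ matrix, and R_J a d₁×d₂ matrix. Define Σ_B = [[(1/α)J₁⁻¹, −(1/α)J₁⁻¹R_J J₂⁻¹],[−(1/α)J₂⁻¹R_Jᵀ J₁⁻¹, J₂⁻¹ + (1/α)J₂⁻¹R_Jᵀ J₁⁻¹ R_J J₂⁻¹]]. Then Σ_B is invertible with inverse [[αJ₁ + R_J J₂⁻¹ R_Jᵀ, R_J],[R_Jᵀ, J₂]], and Σ_B is positive definite. -/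
open Matrix

section Aux

variable {m n : Type*} [Fintype m] [Fintype n] [DecidableEq m] [DecidableEq n]

lemma aux_posDef_fromBlocks₂₂ {A : Matrix m m ℝ} (B : Matrix m n ℝ) {D : Matrix n n ℝ}
    (hD : D.PosDef) (h : (A - B * D⁻¹ * Bᵀ).PosDef) :
    (fromBlocks A B Bᵀ D).PosDef := by
  haveI : Invertible D := hD.isUnit.invertible
  have hBt : Bᵀ = Bᴴ := (conjTranspose_eq_transpose_of_trivial B).symm
  rw [posDef_iff_dotProduct_mulVec]
  constructor
  · rw [hBt, IsHermitian.fromBlocks₂₂ A B hD.isHermitian, ← hBt]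
    exact h.isHermitian
  · intro x hx
    have h' : (A - B * D⁻¹ * Bᴴ).PosDef := hBt ▸ h
    have key := schur_complement_eq₂₂ A B (x ∘ Sum.inl) (x ∘ Sum.inr) hD.isHermitian
    rw [dotProduct_mulVec, ← Sum.elim_comp_inl_inr x, hBt, key]
    set u := x ∘ Sum.inl with hu
    set v := x ∘ Sum.inr with hv
    set w := (D⁻¹ * Bᴴ) *ᵥ u + v with hw
    rcases eq_or_ne u 0 with h0 | h0
    · have hv0 : v ≠ 0 := by
        intro hv0
        apply hx
        rw [← Sum.elim_comp_inl_inr x, ← hu, ← hv, h0, hv0]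
        ext (i | i) <;> rfl
      have hw0 : w ≠ 0 := by
        rw [hw, h0]; simpa using hv0
      have h1 : 0 < star w ⬝ᵥ D *ᵥ w := hD.dotProduct_mulVec_pos hw0
      have h2 : 0 ≤ star u ⬝ᵥ (A - B * D⁻¹ * Bᴴ) *ᵥ u := h'.posSemidef.dotProduct_mulVec_nonneg u
      rw [dotProduct_mulVec] at h1 h2
      linarith
    · have h1 : 0 ≤ star w ⬝ᵥ D *ᵥ w := hD.posSemidef.dotProduct_mulVec_nonneg w
      have h2 : 0 < star u ⬝ᵥ (A - B * D⁻¹ * Bᴴ) *ᵥ u := h'.dotProduct_mulVec_pos h0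
      rw [dotProduct_mulVec] at h1 h2
      linarith

end Aux

/-- The asymptotic covariance `Σ_B` of the Laplace approximation of the
cut posterior (Proposition 3) is positive definite, and its inverse is
`[[αJ₁ + R_J J₂⁻¹ R_Jᵀ, R_J],[R_Jᵀ, J₂]]`. -/
theorem sigmaB_inverse_and_posDef {d₁ d₂ : ℕ} (α : ℝ) (hα : 0 < α)
    (J₁ : Matrix (Fin d₁) (Fin d₁) ℝ) (J₂ : Matrix (Fin d₂) (Fin d₂) ℝ)
    (RJ : Matrix (Fin d₁) (Fin d₂) ℝ)
    (hJ₁ : J₁.PosDef) (hJ₂ : J₂.PosDef) :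
    (fromBlocks
        (α⁻¹ • J₁⁻¹) (-(α⁻¹ • (J₁⁻¹ * RJ * J₂⁻¹)))
        (-(α⁻¹ • (J₂⁻¹ * RJᵀ * J₁⁻¹)))
        (J₂⁻¹ + α⁻¹ • (J₂⁻¹ * RJᵀ * J₁⁻¹ * RJ * J₂⁻¹)))⁻¹
      = fromBlocks (α • J₁ + RJ * J₂⁻¹ * RJᵀ) RJ RJᵀ J₂ ∧
    (fromBlocks
        (α⁻¹ • J₁⁻¹) (-(α⁻¹ • (J₁⁻¹ * RJ * J₂⁻¹)))
        (-(α⁻¹ • (J₂⁻¹ * RJᵀ * J₁⁻¹)))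
        (J₂⁻¹ + α⁻¹ • (J₂⁻¹ * RJᵀ * J₁⁻¹ * RJ * J₂⁻¹))).PosDef := by
  have hd1 : IsUnit J₁.det := isUnit_iff_ne_zero.mpr hJ₁.det_pos.ne'
  have hd2 : IsUnit J₂.det := isUnit_iff_ne_zero.mpr hJ₂.det_pos.ne'
  have h1 : J₁⁻¹ * J₁ = 1 := nonsing_inv_mul J₁ hd1
  have h1' : J₁ * J₁⁻¹ = 1 := mul_nonsing_inv J₁ hd1
  have h2 : J₂⁻¹ * J₂ = 1 := nonsing_inv_mul J₂ hd2
  have h2' : J₂ * J₂⁻¹ = 1 := mul_nonsing_inv J₂ hd2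
  have hαne : (α : ℝ) ≠ 0 := hα.ne'
  set S := fromBlocks
        (α⁻¹ • J₁⁻¹) (-(α⁻¹ • (J₁⁻¹ * RJ * J₂⁻¹)))
        (-(α⁻¹ • (J₂⁻¹ * RJᵀ * J₁⁻¹)))
        (J₂⁻¹ + α⁻¹ • (J₂⁻¹ * RJᵀ * J₁⁻¹ * RJ * J₂⁻¹)) with hS
  set M := fromBlocks (α • J₁ + RJ * J₂⁻¹ * RJᵀ) RJ RJᵀ J₂ with hM
  -- S * M = 1
  have hSM : S * M = 1 := by
    have tl : (α⁻¹ • J₁⁻¹) * (α • J₁ + RJ * J₂⁻¹ * RJᵀ)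
        + (-(α⁻¹ • (J₁⁻¹ * RJ * J₂⁻¹))) * RJᵀ = (1 : Matrix (Fin d₁) (Fin d₁) ℝ) := by
      simp only [Matrix.mul_add, Matrix.add_mul, Matrix.neg_mul, Matrix.smul_mul,
        Matrix.mul_smul, smul_smul, inv_mul_cancel₀ hαne, mul_inv_cancel₀ hαne, one_smul, Matrix.mul_assoc,
        h1, h2, Matrix.mul_one, Matrix.one_mul]
      match_scalars <;> field_simp <;> ring
    have tr : (α⁻¹ • J₁⁻¹) * RJ + (-(α⁻¹ • (J₁⁻¹ * RJ * J₂⁻¹))) * J₂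
        = (0 : Matrix (Fin d₁) (Fin d₂) ℝ) := by
      simp only [Matrix.mul_add, Matrix.add_mul, Matrix.neg_mul, Matrix.smul_mul,
        Matrix.mul_smul, smul_smul, inv_mul_cancel₀ hαne, mul_inv_cancel₀ hαne, one_smul, Matrix.mul_assoc,
        h1, h2, Matrix.mul_one, Matrix.one_mul]
      match_scalars <;> field_simp <;> ring
    have bl : (-(α⁻¹ • (J₂⁻¹ * RJᵀ * J₁⁻¹))) * (α • J₁ + RJ * J₂⁻¹ * RJᵀ)
        + (J₂⁻¹ + α⁻¹ • (J₂⁻¹ * RJᵀ * J₁⁻¹ * RJ * J₂⁻¹)) * RJᵀ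
        = (0 : Matrix (Fin d₂) (Fin d₁) ℝ) := by
      simp only [Matrix.mul_add, Matrix.add_mul, Matrix.neg_mul, Matrix.smul_mul,
        Matrix.mul_smul, smul_smul, inv_mul_cancel₀ hαne, mul_inv_cancel₀ hαne, one_smul, Matrix.mul_assoc,
        h1, h2, Matrix.mul_one, Matrix.one_mul]
      match_scalars <;> field_simp <;> ring
    have br : (-(α⁻¹ • (J₂⁻¹ * RJᵀ * J₁⁻¹))) * RJ
        + (J₂⁻¹ + α⁻¹ • (J₂⁻¹ * RJᵀ * J₁⁻¹ * RJ * J₂⁻¹)) * J₂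
        = (1 : Matrix (Fin d₂) (Fin d₂) ℝ) := by
      simp only [Matrix.mul_add, Matrix.add_mul, Matrix.neg_mul, Matrix.smul_mul,
        Matrix.mul_smul, smul_smul, inv_mul_cancel₀ hαne, mul_inv_cancel₀ hαne, one_smul, Matrix.mul_assoc,
        h1, h2, Matrix.mul_one, Matrix.one_mul]
      match_scalars <;> field_simp <;> ring
    rw [hS, hM, fromBlocks_multiply, tl, tr, bl, br, fromBlocks_one]
  -- M is positive definite
  have hMpd : M.PosDef := by
    rw [hM]
    apply aux_posDef_fromBlocks₂₂ RJ hJ₂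
    have e : α • J₁ + RJ * J₂⁻¹ * RJᵀ - RJ * J₂⁻¹ * RJᵀ = α • J₁ := by abel
    rw [e]
    have hJt : J₁ᵀ = J₁ := by
      rw [← conjTranspose_eq_transpose_of_trivial]; exact hJ₁.1
    rw [posDef_iff_dotProduct_mulVec]
    refine ⟨by simp [Matrix.IsHermitian, conjTranspose_smul, hJt], fun x hx => ?_⟩
    rw [smul_mulVec, dotProduct_smul, smul_eq_mul]
    exact mul_pos hα (hJ₁.dotProduct_mulVec_pos hx)
  have hinv : S⁻¹ = M := inv_eq_right_inv hSM
  have hSeq : S = M⁻¹ := (inv_eq_left_inv hSM).symm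
  exact ⟨hinv, hSeq ▸ hMpd.inv⟩
end

section
/- With the notation of Propositions 1–3 of the paper, if I₁=J₁ and I₂=J₂ but R_I ≠ 0 (and in the same asymptotic regime α=1), then the Scenario-2 covariance Σ̃ differs from the cut-posterior covariance Σ_B exactly by the blocks involving R_I: Σ̃ − Σ_B = [[0, J₁⁻¹R_I J₂⁻¹],[J₂⁻¹R_IᵀJ₁⁻¹, −J₂⁻¹(R_IᵀJ₁⁻¹R_J + R_JᵀJ₁⁻¹R_I)J₂⁻¹]]. -/
open Matrix

/-- With `I₁ = J₁`, `I₂ = J₂`, `α = 1`, the Scenario-2 covariance `Σ̃`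
differs from the cut-posterior covariance `Σ_B` exactly by the blocks involving `R_I`:
`Σ̃ − Σ_B = [[0, J₁⁻¹R_I J₂⁻¹],[J₂⁻¹R_IᵀJ₁⁻¹, −J₂⁻¹(R_IᵀJ₁⁻¹R_J + R_JᵀJ₁⁻¹R_I)J₂⁻¹]]`. -/
theorem scenario2_minus_cut_posterior_cov {d₁ d₂ : ℕ}
    (I₁ J₁ : Matrix (Fin d₁) (Fin d₁) ℝ) (I₂ J₂ : Matrix (Fin d₂) (Fin d₂) ℝ)
    (RI RJ : Matrix (Fin d₁) (Fin d₂) ℝ)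
    (hJ₁sym : J₁.IsSymm) (hJ₂sym : J₂.IsSymm)
    (hJ₁inv : IsUnit J₁.det) (hJ₂inv : IsUnit J₂.det)
    (h₁ : I₁ = J₁) (h₂ : I₂ = J₂) :
    fromBlocks
        (J₁⁻¹ * I₁ * J₁⁻¹)
        (J₁⁻¹ * RI * J₂⁻¹ - J₁⁻¹ * I₁ * J₁⁻¹ * RJ * J₂⁻¹)
        ((J₁⁻¹ * RI * J₂⁻¹ - J₁⁻¹ * I₁ * J₁⁻¹ * RJ * J₂⁻¹)ᵀ)
        (J₂⁻¹ * (I₂ + RJᵀ * (J₁⁻¹ * I₁ * J₁⁻¹) * RJ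
          - (RIᵀ * J₁⁻¹ * RJ + RJᵀ * J₁⁻¹ * RI)) * J₂⁻¹)
      - fromBlocks
        J₁⁻¹
        (-(J₁⁻¹ * RJ * J₂⁻¹))
        (-(J₂⁻¹ * RJᵀ * J₁⁻¹))
        (J₂⁻¹ + J₂⁻¹ * RJᵀ * J₁⁻¹ * RJ * J₂⁻¹)
      = fromBlocks
        0
        (J₁⁻¹ * RI * J₂⁻¹)
        (J₂⁻¹ * RIᵀ * J₁⁻¹)
        (-(J₂⁻¹ * (RIᵀ * J₁⁻¹ * RJ + RJᵀ * J₁⁻¹ * RI) * J₂⁻¹)) := by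
  subst h₁ h₂
  have e1 : I₁⁻¹ * I₁ * I₁⁻¹ = I₁⁻¹ := by
    rw [Matrix.nonsing_inv_mul I₁ hJ₁inv, one_mul]
  have t1 : (I₁⁻¹)ᵀ = I₁⁻¹ := by
    rw [Matrix.transpose_nonsing_inv, hJ₁sym.eq]
  have t2 : (I₂⁻¹)ᵀ = I₂⁻¹ := by
    rw [Matrix.transpose_nonsing_inv, hJ₂sym.eq]
  rw [sub_eq_add_neg, Matrix.fromBlocks_neg, Matrix.fromBlocks_add]
  rw [Matrix.fromBlocks_inj]
  refine ⟨?_, ?_, ?_, ?_⟩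
  · rw [e1]; abel
  · rw [e1]; abel
  · rw [e1, transpose_sub, Matrix.transpose_mul, Matrix.transpose_mul,
      Matrix.transpose_mul, Matrix.transpose_mul, t1, t2]
    simp only [Matrix.mul_assoc]
    abel
  · have e2 : I₂⁻¹ * I₂ * I₂⁻¹ = I₂⁻¹ := by
      rw [Matrix.nonsing_inv_mul I₂ hJ₂inv, one_mul]
    rw [e1]
    simp only [Matrix.mul_add, Matrix.mul_sub, Matrix.add_mul, Matrix.sub_mul,
      Matrix.mul_assoc]
    rw [show I₂⁻¹ * (I₂ * I₂⁻¹) = I₂⁻¹ by rw [Matrix.mul_nonsing_inv I₂ hJ₂inv, mul_one]]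
    abel
end
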